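/- For every n ≥ 4 and every i ∈ ℤ/n, the image of the generator a_i in the group H(n) has infinite order; in particular H(n) is nontrivial for n ≥ 4. -/

import Mathlib

/-- The relators of Higman's presentation `ℋ(n)` with generators indexed by `ℤ/n`:
for each `i ∈ ℤ/n`, the word `a_{i+1}⁻¹ a_i a_{i+1} a_i⁻²`. -/
def Hrels (n : ℕ) : Set (FreeGroup (ZMod n)) :=
  {r | ∃ i : ZMod n, r =
    (FreeGroup.of (i + 1))⁻¹ * FreeGroup.of i * FreeGroup.of (i + 1) *
      (FreeGroup.of i ^ 2)⁻¹}

/-!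
Following Higman, call `x₀, …, x_m` a chain if `x_{i+1}⁻¹ x_i x_{i+1} = x_i²` for `i < m` and
every `x_i` has infinite order. The affine maps `t : q ↦ q + 1` and `s : q ↦ q / 2` of `ℚ` form a
chain `(t, s)` of length one. Amalgamating a chain with `⟨t, s⟩` along `x_m = t` extends it by
`x_{m+1} = s`, and a ping-pong argument in the amalgam shows that `x₀` and `s` generate a free
group of rank two as soon as `⟨x₀⟩ ∩ ⟨x_m⟩ = 1`. Hence there are chains of every length `m ≥ 2`
whose ends are a free pair. Amalgamating chains `p₀, p₁, p₂` and `q₀, …, q_{n-2}` over the free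
group of rank two, identifying `p₂ = q₀` and `p₀ = q_{n-2}`, closes them up into a cyclic chain of
length `n`, which is a quotient of `H(n)` in which every generator keeps infinite order.
-/

open Function

theorem zpowersHom_injective {G : Type*} [Group G] {g : G} (hg : ¬ IsOfFinOrder g) :
    Injective (zpowersHom G g) :=
  (injective_zpow_iff_not_isOfFinOrder.mpr hg).comp Multiplicative.toAdd.injective

section FreePair

variable {G : Type*} [Group G]

def IsFreePair (a c : G) : Prop :=
  Injective (FreeGroup.lift fun b : Bool => cond b c a)

theorem IsFreePair.symm {a c : G} (h : IsFreePair a c) : IsFreePair c a := by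
  have hswap : FreeGroup.lift (fun b : Bool => cond b a c) =
      (FreeGroup.lift fun b : Bool => cond b c a).comp
        (FreeGroup.freeGroupCongr Equiv.boolNot) := by
    ext b; cases b <;> rfl
  rw [IsFreePair, hswap, MonoidHom.coe_comp]
  exact h.comp (FreeGroup.freeGroupCongr _).injective

theorem IsFreePair.eq_zero_of_zpow_eq_zpow {a c : G} (h : IsFreePair a c) {k l : ℤ}
    (hkl : a ^ k = c ^ l) : k = 0 := by
  have hfree : (FreeGroup.of false ^ k : FreeGroup Bool) = FreeGroup.of true ^ l :=
    h (by simpa using hkl)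
  simpa using congrArg (FreeGroup.lift fun b : Bool => cond b 1 (Multiplicative.ofAdd (1 : ℤ)))
    hfree

end FreePair

namespace Monoid.PushoutI

variable {ι H : Type*} {G : ι → Type*} [Group H] [∀ i, Group (G i)] {φ : ∀ i, H →* G i}

theorem NormalWord.fstIdx_of_smul [DecidableEq ι] [∀ i, DecidableEq (G i)] {d : Transversal φ}
    {i : ι} {g : G i} (hg : g ∉ (φ i).range) {w : NormalWord d} (hw : w.fstIdx ≠ some i) :
    (of (φ := φ) i g • w).fstIdx = some i := by
  rw [← NormalWord.cons_eq_smul g w hw hg]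
  simp [NormalWord.cons, CoprodI.Word.cons, CoprodI.Word.fstIdx]

open Cardinal in
theorem injective_lift_of_zpow_notMem_range [Nontrivial ι] (hφ : ∀ i, Injective (φ i))
    (a : ∀ i, G i) (ha : ∀ i, ∀ k : ℤ, k ≠ 0 → a i ^ k ∉ (φ i).range) :
    Injective (FreeGroup.lift fun i => of (φ := φ) i (a i)) := by
  classical
  obtain ⟨d⟩ := NormalWord.transversal_nonempty φ hφ
  have hlift : FreeGroup.lift (fun i => of (φ := φ) i (a i)) =
      (CoprodI.lift fun i => FreeGroup.lift fun _ : Unit => of (φ := φ) i (a i)).comp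
        freeGroupEquivCoprodI.toMonoidHom := by
    ext i; simp
  rw [hlift, MonoidHom.coe_comp]
  refine Injective.comp ?_ freeGroupEquivCoprodI.injective
  -- ping-pong on normal words: a nonzero power of `a i` lies outside the base, so it turns
  -- every word not starting in `G i` into one starting in `G i`
  refine CoprodI.lift_injective_of_ping_pong _ ?_
    (fun i => {w : NormalWord d | w.fstIdx = some i}) (fun i => ?_) ?_ ?_
  · refine Or.inr ⟨Classical.arbitrary ι, ?_⟩
    rw [mk_congr FreeGroup.freeGroupUnitEquivInt, mk_int]
    exact natCast_lt_aleph0.le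
  · exact ⟨_, NormalWord.fstIdx_of_smul (by simpa using ha i 1 one_ne_zero)
      (w := NormalWord.empty) (by simp [NormalWord.empty, CoprodI.Word.fstIdx, CoprodI.Word.empty])⟩
  · intro i j hij
    simp only [onFun, Set.disjoint_left, Set.mem_ofPred_eq]
    intro w hi hj
    exact hij (Option.some_injective _ (hi.symm.trans hj))
  · rintro i j hij h hh _ ⟨w, hw, rfl⟩
    obtain ⟨k, rfl⟩ : ∃ k : ℤ, FreeGroup.of () ^ k = h :=
      ⟨_, FreeGroup.freeGroupUnitEquivInt.symm_apply_apply h⟩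
    have hk : k ≠ 0 := by rintro rfl; simp at hh
    have hpow : FreeGroup.lift (fun _ => of (φ := φ) i (a i)) (FreeGroup.of () ^ k) =
        of i (a i ^ k) := by simp
    rw [Set.mem_ofPred_eq, hpow]
    have hwj : w.fstIdx = some j := hw
    exact NormalWord.fstIdx_of_smul (ha i k hk) (by simpa [hwj] using hij.symm)

end Monoid.PushoutI

universe u

def Amalgam.Factor (A B : Type u) : Bool → Type u
  | false => A
  | true => B

instance Amalgam.instGroupFactor {A B : Type u} [Group A] [Group B] :
    ∀ b, Group (Amalgam.Factor A B b)
  | false => ‹Group A›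
  | true => ‹Group B›

section Amalgam

variable {H A B : Type u} [Group H] [Group A] [Group B]

def Amalgam.maps (f : H →* A) (g : H →* B) : ∀ b, H →* Amalgam.Factor A B b
  | false => f
  | true => g

abbrev Amalgam (f : H →* A) (g : H →* B) : Type u := Monoid.PushoutI (Amalgam.maps f g)

namespace Amalgam

variable {f : H →* A} {g : H →* B}

def inl : A →* Amalgam f g := Monoid.PushoutI.of (φ := maps f g) false

def inr : B →* Amalgam f g := Monoid.PushoutI.of (φ := maps f g) true

theorem inl_apply_eq_inr_apply (h : H) : (inl (f h) : Amalgam f g) = inr (g h) :=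
  (Monoid.PushoutI.of_apply_eq_base _ false h).trans
    (Monoid.PushoutI.of_apply_eq_base _ true h).symm

variable (hf : Injective f) (hg : Injective g)
include hf hg

theorem maps_injective : ∀ b, Injective (maps f g b)
  | false => hf
  | true => hg

theorem inl_injective : Injective (inl : A →* Amalgam f g) :=
  Monoid.PushoutI.of_injective (maps_injective hf hg) false

theorem inr_injective : Injective (inr : B →* Amalgam f g) :=
  Monoid.PushoutI.of_injective (maps_injective hf hg) true

theorem isFreePair_inl_inr {a : A} {c : B} (ha : ∀ k : ℤ, k ≠ 0 → a ^ k ∉ f.range)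
    (hc : ∀ k : ℤ, k ≠ 0 → c ^ k ∉ g.range) : IsFreePair (inl a : Amalgam f g) (inr c) := by
  let x : ∀ b, Factor A B b
    | false => a
    | true => c
  have hx : (fun b => Monoid.PushoutI.of (φ := maps f g) b (x b)) =
      fun b => cond b (inr c) (inl a) := by
    funext b; cases b <;> rfl
  have hfree := Monoid.PushoutI.injective_lift_of_zpow_notMem_range (maps_injective hf hg) x
    (by rintro (_ | _); exacts [ha, hc])
  rwa [hx] at hfree

end Amalgam

end Amalgam

structure IsHigmanChain {G : Type*} [Group G] (m : ℕ) (x : ℕ → G) : Prop where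
  conj_eq_sq : ∀ i < m, (x (i + 1))⁻¹ * x i * x (i + 1) = x i ^ 2
  not_isOfFinOrder : ∀ i ≤ m, ¬ IsOfFinOrder (x i)

namespace IsHigmanChain

variable {G K : Type*} [Group G] [Group K] {m k : ℕ} {x y : ℕ → G}

theorem map (hx : IsHigmanChain m x) {f : G →* K} (hf : Injective f) :
    IsHigmanChain m (f ∘ x) where
  conj_eq_sq i hi := by simp only [comp_apply, ← map_inv, ← map_mul, ← map_pow, hx.conj_eq_sq i hi]
  not_isOfFinOrder i hi := by
    rw [comp_apply, hf.isOfFinOrder_iff]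
    exact hx.not_isOfFinOrder i hi

theorem append (hx : IsHigmanChain m x) (hy : IsHigmanChain k y) (hxy : x m = y 0) :
    IsHigmanChain (m + k) fun i => if i ≤ m then x i else y (i - m) := by
  have hright (i : ℕ) (hi : m ≤ i) : (if i ≤ m then x i else y (i - m)) = y (i - m) := by
    split_ifs with h
    · obtain rfl : i = m := le_antisymm h hi
      simpa using hxy
    · rfl
  constructor
  · intro i hi
    rcases lt_or_ge i m with him | hmi
    · simp only [if_pos him.le, if_pos (Nat.succ_le_of_lt him), hx.conj_eq_sq i him]
    · rw [hright i hmi, hright (i + 1) (by omega), Nat.sub_add_comm hmi]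
      exact hy.conj_eq_sq (i - m) (by omega)
  · intro i hi
    rcases le_or_gt i m with him | hmi
    · rw [if_pos him]
      exact hx.not_isOfFinOrder i him
    · rw [hright i hmi.le]
      exact hy.not_isOfFinOrder (i - m) (by omega)

end IsHigmanChain

namespace BaumslagSolitar

def t : Equiv.Perm ℚ := MulAction.toPerm (Multiplicative.ofAdd (1 : ℚ))

def s : Equiv.Perm ℚ := MulAction.toPerm (Units.mk0 (2⁻¹ : ℚ) (by norm_num))

theorem t_zpow_apply (k : ℤ) (q : ℚ) : (t ^ k) q = k + q := by
  rw [t, ← MulAction.toPermHom_apply, ← map_zpow]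
  simp [← ofAdd_zsmul]

theorem s_zpow_apply (k : ℤ) (q : ℚ) : (s ^ k) q = 2⁻¹ ^ k * q := by
  rw [s, ← MulAction.toPermHom_apply, ← map_zpow]
  simp [Units.smul_def]

theorem s_inv_mul_t_mul_s : s⁻¹ * t * s = t ^ 2 := by
  ext q
  have ht (q : ℚ) : t q = 1 + q := by simpa using t_zpow_apply 1 q
  have ht2 (q : ℚ) : (t ^ 2) q = 2 + q := by simpa using t_zpow_apply 2 q
  have hs (q : ℚ) : s q = 2⁻¹ * q := by simpa using s_zpow_apply 1 q
  have hs' (q : ℚ) : s⁻¹ q = 2 * q := by simpa using s_zpow_apply (-1) q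
  simp only [Equiv.Perm.mul_apply, ht, ht2, hs, hs']
  ring

theorem eq_zero_of_t_zpow_eq_s_zpow {k l : ℤ} (h : t ^ k = s ^ l) : k = 0 ∧ l = 0 := by
  have h0 := congrArg (· 0) h
  have h1 := congrArg (· 1) h
  simp only [t_zpow_apply, s_zpow_apply] at h0 h1
  obtain rfl : k = 0 := by simpa using h0
  refine ⟨rfl, zpow_right_injective₀ (a := (2⁻¹ : ℚ)) (by norm_num) (by norm_num) ?_⟩
  simpa using h1.symm

theorem t_not_isOfFinOrder : ¬ IsOfFinOrder t := by
  rw [isOfFinOrder_iff_zpow_eq_one]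
  rintro ⟨k, hk, h⟩
  exact hk (eq_zero_of_t_zpow_eq_s_zpow (h.trans (zpow_zero s).symm)).1

theorem s_not_isOfFinOrder : ¬ IsOfFinOrder s := by
  rw [isOfFinOrder_iff_zpow_eq_one]
  rintro ⟨k, hk, h⟩
  exact hk (eq_zero_of_t_zpow_eq_s_zpow ((zpow_zero t).trans h.symm)).2

def chain (i : ℕ) : Equiv.Perm ℚ := if i = 0 then t else s

theorem isHigmanChain_chain : IsHigmanChain 1 chain where
  conj_eq_sq i hi := by
    obtain rfl : i = 0 := by omega
    exact s_inv_mul_t_mul_s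
  not_isOfFinOrder i _ := by
    unfold chain
    split_ifs
    exacts [t_not_isOfFinOrder, s_not_isOfFinOrder]

end BaumslagSolitar

open BaumslagSolitar in
theorem IsHigmanChain.exists_extend {A : Type} [Group A] {m : ℕ} {x : ℕ → A}
    (hx : IsHigmanChain m x) (hsep : ∀ k l : ℤ, x 0 ^ k = x m ^ l → k = 0) :
    ∃ (B : Type) (_ : Group B) (y : ℕ → B),
      IsHigmanChain (m + 1) y ∧ IsFreePair (y 0) (y (m + 1)) := by
  have hf := zpowersHom_injective (hx.not_isOfFinOrder m le_rfl)
  have hg := zpowersHom_injective t_not_isOfFinOrder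
  let f := zpowersHom A (x m)
  let g := zpowersHom _ t
  let inl := Amalgam.inl (f := f) (g := g)
  let inr := Amalgam.inr (f := f) (g := g)
  have hjoin : inl (x m) = inr t := by
    simpa [f, g] using Amalgam.inl_apply_eq_inr_apply (f := f) (g := g) (Multiplicative.ofAdd 1)
  let y (i : ℕ) := if i ≤ m then inl (x i) else inr (chain (i - m))
  have hy : IsHigmanChain (m + 1) y := (hx.map (Amalgam.inl_injective hf hg)).append
    (isHigmanChain_chain.map (Amalgam.inr_injective hf hg)) hjoin
  have hy0 : y 0 = inl (x 0) := if_pos m.zero_le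
  have hy1 : y (m + 1) = inr s := by simp [y, chain]
  refine ⟨_, inferInstance, y, hy, ?_⟩
  rw [hy0, hy1]
  refine Amalgam.isFreePair_inl_inr hf hg ?_ ?_
  · rintro k hk ⟨l, hl⟩
    exact hk (hsep k l.toAdd (by simpa using hl.symm))
  · rintro k hk ⟨l, hl⟩
    exact hk (eq_zero_of_t_zpow_eq_s_zpow (by simpa using hl)).2

open BaumslagSolitar in
theorem exists_isHigmanChain_isFreePair {m : ℕ} (hm : 2 ≤ m) :
    ∃ (G : Type) (_ : Group G) (x : ℕ → G), IsHigmanChain m x ∧ IsFreePair (x 0) (x m) := by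
  induction m, hm using Nat.le_induction with
  | base => exact isHigmanChain_chain.exists_extend fun k l h =>
      (eq_zero_of_t_zpow_eq_s_zpow h).1
  | succ m _ ih =>
    obtain ⟨G, _, x, hx, hfree⟩ := ih
    exact hx.exists_extend fun k l => hfree.eq_zero_of_zpow_eq_zpow

theorem exists_isHigmanChain_cyclic {n : ℕ} (hn : 4 ≤ n) :
    ∃ (G : Type) (_ : Group G) (y : ℕ → G), IsHigmanChain n y ∧ y n = y 0 := by
  obtain ⟨P, _, p, hp, hpfree⟩ := exists_isHigmanChain_isFreePair le_rfl
  obtain ⟨Q, _, q, hq, hqfree⟩ := exists_isHigmanChain_isFreePair (m := n - 2) (by omega)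
  let f := FreeGroup.lift fun b : Bool => cond b (p 2) (p 0)
  let g := FreeGroup.lift fun b : Bool => cond b (q 0) (q (n - 2))
  have hjoin (b : Bool) := Amalgam.inl_apply_eq_inr_apply (f := f) (g := g) (FreeGroup.of b)
  simp only [f, g, FreeGroup.lift_apply_of] at hjoin
  let y (i : ℕ) := if i ≤ 2 then Amalgam.inl (f := f) (g := g) (p i) else Amalgam.inr (q (i - 2))
  have hy : IsHigmanChain (2 + (n - 2)) y :=
    (hp.map (Amalgam.inl_injective hpfree hqfree.symm)).append
      (hq.map (Amalgam.inr_injective hpfree hqfree.symm)) (hjoin true)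
  refine ⟨_, inferInstance, y, by rwa [Nat.add_sub_cancel' (by omega)] at hy, ?_⟩
  simp only [y, if_neg (show ¬ n ≤ 2 by omega), if_pos (Nat.zero_le 2)]
  exact (hjoin false).symm

theorem not_isOfFinOrder_of_isHigmanChain {n : ℕ} [NeZero n] {G : Type*} [Group G] {y : ℕ → G}
    (hy : IsHigmanChain n y) (hcyc : y n = y 0) (i : ZMod n) :
    ¬ IsOfFinOrder (PresentedGroup.of (rels := Hrels n) i) := by
  have hsucc (j : ZMod n) : y (j + 1).val = y (j.val + 1) := by
    rw [ZMod.val_add, ZMod.val_one_eq_one_mod, Nat.add_mod_mod]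
    rcases (show j.val + 1 ≤ n from j.val_lt).lt_or_eq with hlt | heq
    · rw [Nat.mod_eq_of_lt hlt]
    · rw [heq, Nat.mod_self, hcyc]
  have hrels : ∀ r ∈ Hrels n, FreeGroup.lift (fun j : ZMod n => y j.val) r = 1 := by
    rintro _ ⟨j, rfl⟩
    simp [hsucc, hy.conj_eq_sq j.val j.val_lt]
  intro hfin
  exact hy.not_isOfFinOrder i.val i.val_lt.le
    (by simpa using (PresentedGroup.toGroup hrels).isOfFinOrder hfin)

theorem stmt_9 (n : ℕ) (hn : 4 ≤ n) :
    (∀ i : ZMod n, ¬ IsOfFinOrder (PresentedGroup.of (rels := Hrels n) i)) ∧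
      Nontrivial (PresentedGroup (Hrels n)) := by
  have : NeZero n := ⟨by omega⟩
  obtain ⟨G, _, y, hy, hcyc⟩ := exists_isHigmanChain_cyclic hn
  have hinf := not_isOfFinOrder_of_isHigmanChain hy hcyc
  exact ⟨hinf, nontrivial_of_ne (PresentedGroup.of 0) 1 fun h => hinf 0 (h ▸ IsOfFinOrder.one)⟩
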